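/- In the Jordan plane over a field of characteristic p > 2, for every t ∈ k one has (y + tx)^p = y^p + (t^p − t) x^p. -/

import Mathlib

/-!
From `y x = x y - c x²` one gets `y xⁿ = xⁿ y - n c xⁿ⁺¹`, so left multiplication by `y + t x`
sends the normally ordered monomial `xʲ yᵐ` to `xʲ yᵐ⁺¹ + (t - j c) xʲ⁺¹ yᵐ`. By Pascal's rule,
`(y + t x)ⁿ = ∑ⱼ C(n, j) ∏_{i<j} (t - i c) xʲ yⁿ⁻ʲ`. For `n = p` the binomial coefficients with
`0 < j < p` vanish, and `∏_{i<p} (t - i c) = t^p - c^(p-1) t` since `X^p - X = ∏_{a ∈ 𝔽_p} (X - a)`.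
For `c = 1/2`, Fermat's little theorem gives `c^(p-1) = 1`.
-/

open Finset Polynomial

theorem ZMod.X_pow_sub_X_eq_prod_X_sub_C (p : ℕ) [Fact p.Prime] :
    (X ^ p - X : (ZMod p)[X]) = ∏ a : ZMod p, (X - C a) := by
  have hp := (Fact.out : p.Prime).one_lt
  have hroots := FiniteField.roots_X_pow_card_sub_X (ZMod p)
  rw [ZMod.card] at hroots
  rw [← prod_multiset_X_sub_C_of_monic_of_roots_card_eq (monic_X_pow_sub (by simpa using hp)),
    hroots]
  · rfl
  · rw [hroots, FiniteField.X_pow_card_sub_X_natDegree_eq _ hp, card_val, card_univ, ZMod.card]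

theorem ZMod.prod_univ_eq_prod_range {M : Type*} [CommMonoid M] (n : ℕ) [NeZero n]
    (f : ZMod n → M) : ∏ a, f a = ∏ i ∈ range n, f i :=
  prod_nbij' ZMod.val Nat.cast (fun a _ => mem_range.2 (ZMod.val_lt a)) (fun _ _ => mem_univ _)
    (fun a _ => ZMod.natCast_zmod_val a) (fun _ hi => ZMod.val_cast_of_lt (mem_range.1 hi))
    (fun a _ => by rw [ZMod.natCast_zmod_val])

theorem CharP.prod_range_sub_natCast {R : Type*} [CommRing R] (p : ℕ) [Fact p.Prime] [CharP R p]
    (t : R) : ∏ i ∈ range p, (t - i) = t ^ p - t := by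
  have := congrArg (eval₂ (ZMod.castHom dvd_rfl R) t) (ZMod.X_pow_sub_X_eq_prod_X_sub_C p)
  simpa [eval₂_finsetProd, ZMod.prod_univ_eq_prod_range] using this.symm

theorem CharP.prod_range_sub_natCast_mul {K : Type*} [Field K] (p : ℕ) [Fact p.Prime] [CharP K p]
    (c t : K) : ∏ i ∈ range p, (t - i * c) = t ^ p - c ^ (p - 1) * t := by
  have hp := (Fact.out : p.Prime).one_lt
  rcases eq_or_ne c 0 with rfl | hc
  · simp [zero_pow (Nat.sub_ne_zero_of_lt hp)]
  calc ∏ i ∈ range p, (t - i * c) = ∏ i ∈ range p, (c * (t / c - i)) := by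
        refine prod_congr rfl fun i _ => ?_
        field_simp
    _ = c ^ p * ((t / c) ^ p - t / c) := by
        rw [prod_mul_distrib, prod_const, card_range, CharP.prod_range_sub_natCast]
    _ = t ^ p - c ^ (p - 1) * t := by
        rw [div_pow, mul_sub, mul_div_cancel₀ _ (pow_ne_zero _ hc), ← pow_sub_mul_pow c hp.le,
          pow_one, mul_assoc, mul_div_cancel₀ _ hc]

section

variable {K A : Type*} [CommRing K] [Ring A] [Algebra K A] {x y : A} {c : K}

theorem mul_pow_eq_of_mul_eq_sub_smul_sq (h : y * x = x * y - c • x ^ 2) (n : ℕ) :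
    y * x ^ n = x ^ n * y - (n * c) • x ^ (n + 1) := by
  induction n with
  | zero => simp
  | succ n ih =>
    calc y * x ^ (n + 1) = (x ^ n * y - (n * c) • x ^ (n + 1)) * x := by
          rw [← ih, mul_assoc, ← pow_succ]
      _ = x ^ n * (y * x) - (n * c) • x ^ (n + 2) := by
        rw [sub_mul, smul_mul_assoc, mul_assoc, ← pow_succ]
      _ = x ^ (n + 1) * y - ((n + 1 : ℕ) * c) • x ^ (n + 2) := by
        rw [h, mul_sub, mul_smul_comm, ← mul_assoc, ← pow_succ, ← pow_add, Nat.cast_succ, add_mul,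
          one_mul, add_smul]
        abel

theorem add_smul_mul_pow_mul_pow (h : y * x = x * y - c • x ^ 2) (t : K) (j m : ℕ) :
    (y + t • x) * (x ^ j * y ^ m) = x ^ j * y ^ (m + 1) + (t - j * c) • (x ^ (j + 1) * y ^ m) := by
  rw [add_mul, smul_mul_assoc, ← mul_assoc, mul_pow_eq_of_mul_eq_sub_smul_sq h, sub_mul,
    smul_mul_assoc, mul_assoc, ← pow_succ', ← mul_assoc x, ← pow_succ', sub_smul]
  abel

theorem add_smul_pow_eq_sum (h : y * x = x * y - c • x ^ 2) (t : K) (n : ℕ) :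
    (y + t • x) ^ n = ∑ j ∈ range (n + 1),
      n.choose j • (∏ i ∈ range j, (t - i * c)) • (x ^ j * y ^ (n - j)) := by
  set f : ℕ → ℕ → A := fun j m => (∏ i ∈ range j, (t - i * c)) • (x ^ j * y ^ m)
  have hf : ∀ j m, (y + t • x) * f j m = f j (m + 1) + f (j + 1) m := fun j m => by
    simp only [f, mul_smul_comm, add_smul_mul_pow_mul_pow h, smul_add, smul_smul, prod_range_succ]
  show _ = ∑ j ∈ range (n + 1), n.choose j • f j (n - j)
  induction n with
  | zero => simp [f]
  | succ n ih =>
    rw [sum_choose_succ_nsmul, pow_succ', ih, mul_sum, ← sum_add_distrib]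
    refine sum_congr rfl fun j hj => ?_
    rw [mul_smul_comm, hf, smul_add, Nat.sub_add_comm (Nat.lt_succ_iff.1 (mem_range.1 hj))]

end

theorem add_smul_pow_char {K A : Type*} [Field K] [Ring A] [Algebra K A] (p : ℕ) [Fact p.Prime]
    [CharP K p] {x y : A} {c : K} (h : y * x = x * y - c • x ^ 2) (t : K) :
    (y + t • x) ^ p = y ^ p + (t ^ p - c ^ (p - 1) * t) • x ^ p := by
  have hp : p.Prime := Fact.out
  rw [add_smul_pow_eq_sum h, sum_range_succ, sum_eq_single_of_mem 0 (mem_range.2 hp.pos)]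
  · simp [CharP.prod_range_sub_natCast_mul]
  · intro j hj hj0
    rw [← Nat.cast_smul_eq_nsmul K, (CharP.cast_eq_zero_iff K p _).2
      (hp.dvd_choose_self hj0 (mem_range.1 hj)), zero_smul]

/-- In the Jordan plane over a field of characteristic `p > 2` (universally: in any
algebra with elements `x, y` satisfying `yx = xy - (1/2)x²`), for every `t ∈ k` one has
`(y + tx)^p = y^p + (t^p - t) x^p`. -/
theorem stmt16 (p : ℕ) [Fact p.Prime] (hp2 : 2 < p) (K : Type*) [Field K] [CharP K p]
    (A : Type*) [Ring A] [Algebra K A] (x y : A)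
    (hrel : y * x = x * y - (1/2 : K) • x ^ 2) (t : K) :
    (y + t • x) ^ p = y ^ p + (t ^ p - t) • x ^ p := by
  have h2 : (2 : K) ≠ 0 := Ring.two_ne_zero (by rw [ringChar.eq K p]; omega)
  have h2p : (2 : K) ^ p = 2 := by simpa [frobenius_def] using map_natCast (frobenius K p) 2
  have hfermat : (2 : K) ^ (p - 1) = 1 := mul_left_cancel₀ h2 <| by
    rw [← pow_succ', Nat.sub_add_cancel (by omega), h2p, mul_one]
  rw [add_smul_pow_char p hrel, one_div, inv_pow, hfermat, inv_one, one_mul]
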